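/- arXiv:2109.01494 — 2 statements merged into one kernel-verified Lean document; each statement's English description precedes it below -/
import Mathlib

section
/- Under reservoir sampling with budget b, the variance of the subgraph-count estimator N^F_G satisfies Var[N^F_G] ≤ |H^F_G|^2 · ∏_{i=0}^{|E_F|-2} (|E_G| - i)/(b - i), for b ≥ |E_F| - 1. -/
/-!
By Cauchy–Schwarz, `Cov[X_h, X_h'] ≤ σ_h σ_h'`, so `Var[∑ X_h] ≤ (∑ σ_h)²`. Each `X_h` takes the
values `1 / p_h` and `0`, so `σ_h² = 1 / p_h - 1`, and the lower bound
`p_h ≥ min 1 (∏ (b - i) / (m - 1 - i))` makes this at most `∏ (m - 1 - i) / (b - i)`, which is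
at most `∏ (m - i) / (b - i)`. A copy of `F` in `G` forces `|E_F| ≤ |E_G|`, which keeps every
factor positive.
-/

open MeasureTheory ProbabilityTheory Finset

namespace ProbabilityTheory

variable {Ω : Type*} {mΩ : MeasurableSpace Ω} {μ : Measure Ω}

lemma covariance_le_sqrt_variance_mul_sqrt_variance [IsFiniteMeasure μ] {X Y : Ω → ℝ}
    (hX : MemLp X 2 μ) (hY : MemLp Y 2 μ) :
    cov[X, Y; μ] ≤ √Var[X; μ] * √Var[Y; μ] := by
  have centered {Z : Ω → ℝ} (hZ : MemLp Z 2 μ) :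
      MemLp (fun ω ↦ Z ω - μ[Z]) (ENNReal.ofReal 2) μ := by
    rw [ENNReal.ofReal_ofNat]
    exact hZ.sub (memLp_const _)
  calc cov[X, Y; μ] ≤ ∫ ω, ‖X ω - μ[X]‖ * ‖Y ω - μ[Y]‖ ∂μ := by
        refine (le_abs_self _).trans (abs_integral_le_integral_abs.trans_eq ?_)
        simp [abs_mul]
    _ ≤ (∫ ω, ‖X ω - μ[X]‖ ^ (2 : ℝ) ∂μ) ^ (1 / 2 : ℝ) *
          (∫ ω, ‖Y ω - μ[Y]‖ ^ (2 : ℝ) ∂μ) ^ (1 / 2 : ℝ) :=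
        integral_mul_norm_le_Lp_mul_Lq Real.HolderConjugate.two_two (centered hX) (centered hY)
    _ = √Var[X; μ] * √Var[Y; μ] := by
        simp [variance_eq_integral hX.aemeasurable, variance_eq_integral hY.aemeasurable,
          Real.sqrt_eq_rpow]

lemma variance_sum_le_sq_sum_sqrt_variance [IsFiniteMeasure μ] {ι : Type*} {s : Finset ι}
    {X : ι → Ω → ℝ} (hX : ∀ i ∈ s, MemLp (X i) 2 μ) :
    Var[fun ω ↦ ∑ i ∈ s, X i ω; μ] ≤ (∑ i ∈ s, √Var[X i; μ]) ^ 2 := by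
  rw [variance_fun_sum' hX, sq, sum_mul_sum]
  gcongr with i hi j hj
  exact covariance_le_sqrt_variance_mul_sqrt_variance (hX i hi) (hX j hj)

lemma variance_eq_one_div_sub_one_of_bernoulli [IsProbabilityMeasure μ] {X : Ω → ℝ} {p : ℝ}
    (hp₀ : 0 < p) (hp₁ : p ≤ 1) (hX : MemLp X 2 μ)
    (hhit : μ {ω | X ω = 1 / p} = ENNReal.ofReal p)
    (hmiss : μ {ω | X ω = 0} = ENNReal.ofReal (1 - p)) :
    Var[X; μ] = 1 / p - 1 := by
  set A := {ω | X ω = 1 / p}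
  have hA : NullMeasurableSet A μ :=
    hX.aemeasurable.nullMeasurableSet_preimage (measurableSet_singleton _)
  have hB : NullMeasurableSet {ω | X ω = 0} μ :=
    hX.aemeasurable.nullMeasurableSet_preimage (measurableSet_singleton _)
  have hAB : Disjoint A {ω | X ω = 0} :=
    Set.disjoint_left.2 fun ω h₁ h₀ ↦ one_div_ne_zero hp₀.ne' (h₁.symm.trans h₀)
  have htwo : ∀ᵐ ω ∂μ, ω ∈ A ∪ {ω | X ω = 0} := by
    refine (ae_iff_measure_eq (hA.union hB)).2 ?_
    change μ (A ∪ _) = _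
    rw [measure_union₀ hB hAB.aedisjoint, hhit, hmiss,
      ← ENNReal.ofReal_add hp₀.le (by linarith)]
    simp
  have hXA : X =ᵐ[μ] A.indicator fun _ ↦ 1 / p := by
    filter_upwards [htwo] with ω hω
    rcases hω with h | h
    · rw [Set.indicator_of_mem h]
      exact h
    · rw [Set.indicator_of_notMem (hAB.notMem_of_mem_right h)]
      exact h
  have hmean : μ[X] = 1 := by
    rw [integral_congr_ae hXA, integral_indicator₀ hA, setIntegral_const, measureReal_def, hhit,
      ENNReal.toReal_ofReal hp₀.le, smul_eq_mul, mul_one_div_cancel hp₀.ne']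
  have hsq : μ[X ^ 2] = 1 / p := by
    have : X ^ 2 =ᵐ[μ] fun ω ↦ 1 / p * X ω := by
      filter_upwards [htwo] with ω hω
      rcases hω with (h : X ω = 1 / p) | (h : X ω = 0) <;> simp [h, sq]
    rw [integral_congr_ae this, integral_const_mul, hmean, mul_one]
  rw [variance_eq_sub hX, hmean, hsq]
  ring

end ProbabilityTheory

lemma SimpleGraph.IsContained.card_edgeFinset_le {V W : Type*} {A : SimpleGraph V}
    {B : SimpleGraph W} [Fintype A.edgeSet] [Fintype B.edgeSet] (h : A.IsContained B) :
    #A.edgeFinset ≤ #B.edgeFinset := by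
  obtain ⟨f⟩ := h
  simpa [← SimpleGraph.card_edgeSet] using Fintype.card_le_of_embedding f.mapEdgeSet

lemma one_div_sub_one_le_of_min_one_le {p q r : ℝ} (hq : 0 < q) (hqr : q⁻¹ ≤ r)
    (hp : min 1 q ≤ p) : 1 / p - 1 ≤ r := by
  rcases le_total q 1 with hq₁ | hq₁
  · rw [min_eq_right hq₁] at hp
    have : 1 / p ≤ q⁻¹ := by rw [one_div]; exact inv_anti₀ hq hp
    linarith
  · rw [min_eq_left hq₁] at hp
    have : 1 / p ≤ 1 := by rw [div_le_one₀ (by linarith)]; exact hp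
    linarith [inv_pos.2 hq]

section DetectionProbability

variable {b m : ℝ} {n : ℕ}

lemma prod_sub_div_sub_one_sub_pos (hb : (n : ℝ) - 1 < b) (hm : (n : ℝ) < m) :
    0 < ∏ i ∈ range n, (b - i) / (m - 1 - i) := by
  refine prod_pos fun i hi ↦ div_pos ?_ ?_
  all_goals
    have : (i : ℝ) + 1 ≤ n := by exact_mod_cast mem_range.1 hi
    linarith

lemma inv_prod_sub_div_sub_one_sub_le (hb : (n : ℝ) - 1 < b) (hm : (n : ℝ) < m) :
    (∏ i ∈ range n, (b - i) / (m - 1 - i))⁻¹ ≤ ∏ i ∈ range n, (m - i) / (b - i) := by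
  rw [← prod_inv_distrib]
  refine prod_le_prod (fun i hi ↦ ?_) fun i hi ↦ ?_
  all_goals
    have : (i : ℝ) + 1 ≤ n := by exact_mod_cast mem_range.1 hi
    rw [inv_div]
  · exact div_nonneg (by linarith) (by linarith)
  · exact div_le_div_of_nonneg_right (by linarith) (by linarith)

end DetectionProbability

theorem streaming_subgraph_estimator_variance_bound_general
    {V W : Type*} [Fintype V] [Fintype W]
    (G : SimpleGraph V) [DecidableRel G.Adj] (F : SimpleGraph W) [DecidableRel F.Adj]
    {Ω : Type*} [MeasurableSpace Ω] (μ : Measure Ω) [IsProbabilityMeasure μ]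
    (H : Finset G.Subgraph)
    (hH : ∀ h : G.Subgraph, h ∈ H ↔ Nonempty (h.coe ≃g F))
    (X : G.Subgraph → Ω → ℝ) (p : G.Subgraph → ℝ)
    (m k b : ℕ) (hm : m = G.edgeFinset.card) (hk : k = F.edgeFinset.card)
    (hk1 : 1 ≤ k) (hb : k - 1 ≤ b)
    (hL2 : ∀ h ∈ H, MemLp (X h) 2 μ)
    (hp : ∀ h ∈ H, 0 < p h ∧ p h ≤ 1)
    (hplb : ∀ h ∈ H,
      min 1 (∏ i ∈ Finset.range (k - 1), ((b : ℝ) - i) / ((m : ℝ) - 1 - i)) ≤ p h)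
    (hdetect : ∀ h ∈ H, μ {ω | X h ω = 1 / p h} = ENNReal.ofReal (p h))
    (hmiss : ∀ h ∈ H, μ {ω | X h ω = 0} = ENNReal.ofReal (1 - p h)) :
    variance (fun ω => ∑ h ∈ H, X h ω) μ ≤
      (H.card : ℝ) ^ 2 * ∏ i ∈ Finset.range (k - 1), ((m : ℝ) - i) / ((b : ℝ) - i) := by
  rcases H.eq_empty_or_nonempty with rfl | ⟨h₀, hh₀⟩
  · simp only [sum_empty, card_empty]
    exact (variance_zero μ).trans_le (by simp)
  have hkm : k ≤ m := by
    obtain ⟨e⟩ := (hH h₀).1 hh₀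
    rw [hm, hk]
    exact (SimpleGraph.isContained_iff_exists_iso_subgraph.2 ⟨h₀, ⟨e.symm⟩⟩).card_edgeFinset_le
  have hb' : ((k - 1 : ℕ) : ℝ) - 1 < b := by
    have : ((k - 1 : ℕ) : ℝ) ≤ b := by exact_mod_cast hb
    linarith
  have hm' : ((k - 1 : ℕ) : ℝ) < m := by exact_mod_cast (by omega : k - 1 < m)
  set P := ∏ i ∈ Finset.range (k - 1), ((m : ℝ) - i) / ((b : ℝ) - i)
  have hvar : ∀ h ∈ H, Var[X h; μ] ≤ P := fun h hh ↦ by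
    rw [variance_eq_one_div_sub_one_of_bernoulli (hp h hh).1 (hp h hh).2 (hL2 h hh) (hdetect h hh)
      (hmiss h hh)]
    exact one_div_sub_one_le_of_min_one_le (prod_sub_div_sub_one_sub_pos hb' hm')
      (inv_prod_sub_div_sub_one_sub_le hb' hm') (hplb h hh)
  have hP : 0 ≤ P := (variance_nonneg _ _).trans (hvar h₀ hh₀)
  calc Var[fun ω ↦ ∑ h ∈ H, X h ω; μ] ≤ (∑ h ∈ H, √Var[X h; μ]) ^ 2 :=
        variance_sum_le_sq_sum_sqrt_variance hL2
    _ ≤ (∑ _h ∈ H, √P) ^ 2 := by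
        gcongr with h hh
        exact hvar h hh
    _ = (H.card : ℝ) ^ 2 * P := by
        rw [Finset.sum_const, nsmul_eq_mul, mul_pow, Real.sq_sqrt hP]

/-- Variance bound for the reservoir-sampling subgraph-count estimator.
The stream has `m = |E_G|` edges, the pattern `F` has `k = |E_F|` edges, the budget is
`b ≥ k - 1`.  Each estimator variable `X h` (for a copy `h ∈ H^F_G`) takes value `1 / p h`
with probability `p h` and `0` otherwise, where `p h` is at least the final-time detection
probability `min 1 (∏_{i=0}^{k-2} (b - i) / (m - 1 - i))`.  Then the variance of the
total estimator `N^F_G = ∑ h, X h` is at most `|H^F_G|² · ∏_{i=0}^{k-2} (m - i)/(b - i)`. -/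
theorem streaming_subgraph_estimator_variance_bound
    {V W : Type*} [Fintype V] [DecidableEq V] [Fintype W] [DecidableEq W]
    (G : SimpleGraph V) [DecidableRel G.Adj] (F : SimpleGraph W) [DecidableRel F.Adj]
    {Ω : Type*} [MeasurableSpace Ω] (μ : Measure Ω) [IsProbabilityMeasure μ]
    (H : Finset G.Subgraph)
    (hH : ∀ h : G.Subgraph, h ∈ H ↔ Nonempty (h.coe ≃g F))
    (X : G.Subgraph → Ω → ℝ) (p : G.Subgraph → ℝ)
    (m k b : ℕ) (hm : m = G.edgeFinset.card) (hk : k = F.edgeFinset.card)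
    (hk1 : 1 ≤ k) (hb : k - 1 ≤ b)
    (hL2 : ∀ h ∈ H, MemLp (X h) 2 μ)
    (hp : ∀ h ∈ H, 0 < p h ∧ p h ≤ 1)
    (hplb : ∀ h ∈ H,
      min 1 (∏ i ∈ Finset.range (k - 1), ((b : ℝ) - i) / ((m : ℝ) - 1 - i)) ≤ p h)
    (hdetect : ∀ h ∈ H, μ {ω | X h ω = 1 / p h} = ENNReal.ofReal (p h))
    (hmiss : ∀ h ∈ H, μ {ω | X h ω = 0} = ENNReal.ofReal (1 - p h)) :
    variance (fun ω => ∑ h ∈ H, X h ω) μ ≤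
      (H.card : ℝ) ^ 2 * ∏ i ∈ Finset.range (k - 1), ((m : ℝ) - i) / ((b : ℝ) - i) :=
  streaming_subgraph_estimator_variance_bound_general G F μ H hH X p m k b hm hk hk1 hb hL2 hp hplb
    hdetect hmiss
end

section
/- For the normalized Laplacian L of a simple graph G with no isolated vertices, tr(L³) = |V_G| + Σ_{(u,v) ∈ E_G} 6/(d^u_G d^v_G) - Σ_{triangles {u,v,w}} 6/(d^u_G d^v_G d^w_G). -/
/-!
Write `L = I - N` with `N = D^{-1/2} A D^{-1/2}`, so `tr L³ = n - 3 tr N + 3 tr N² - tr N³`.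
Since `N u v = (dᵘ dᵛ)^{-1/2}` on edges and `0` elsewhere, `tr N = 0`, `tr N²` runs over
ordered adjacent pairs (two per edge, each contributing `1/(dᵘ dᵛ)`) and `tr N³` over ordered
triangles (six per triangle, each contributing `1/(dᵘ dᵛ dʷ)`).
-/

/-- The normalized Laplacian `L = I - D^{-1/2} A D^{-1/2}` of a simple graph:
`L u u = 1`, `L u v = -1/√(dᵘ dᵛ)` when `u ~ v`, and `0` otherwise. -/
noncomputable def normLap {V : Type*} [Fintype V] [DecidableEq V]
    (G : SimpleGraph V) [DecidableRel G.Adj] : Matrix V V ℝ :=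
  fun u v =>
    if u = v then 1
    else if G.Adj u v then -(1 / Real.sqrt ((G.degree u : ℝ) * (G.degree v : ℝ)))
    else 0

/-- The symmetric edge weight `e ↦ c / (dᵘ · dᵛ)` for an edge `e = {u, v}`. -/
noncomputable def edgeTerm {V : Type*} [Fintype V] [DecidableEq V]
    (G : SimpleGraph V) [DecidableRel G.Adj] (c : ℝ) : Sym2 V → ℝ :=
  Sym2.lift ⟨fun u v => c / ((G.degree u : ℝ) * (G.degree v : ℝ)),
    fun u v => by simp [mul_comm]⟩

open Finset Matrix

theorem Finset.card_filter_pairwise_ne_triple {α : Type*} [DecidableEq α] (s : Finset α) :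
    #{p ∈ s ×ˢ s ×ˢ s | p.1 ≠ p.2.1 ∧ p.2.1 ≠ p.2.2 ∧ p.2.2 ≠ p.1}
      = #s * (#s - 1) * (#s - 2) := by
  rw [card_eq_sum_card_fiberwise (f := Prod.fst) (t := s)
    fun p hp => (mem_product.1 (mem_filter.1 hp).1).1, mul_assoc, ← smul_eq_mul, ← sum_const]
  refine sum_congr rfl fun x hx => ?_
  have hfiber : #{p ∈ {p ∈ s ×ˢ s ×ˢ s | p.1 ≠ p.2.1 ∧ p.2.1 ≠ p.2.2 ∧ p.2.2 ≠ p.1} | p.1 = x}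
      = #(s.erase x).offDiag := by
    refine card_nbij' Prod.snd (fun q => (x, q)) ?_ ?_ ?_ ?_ <;> intro p <;> grind
  rw [hfiber, offDiag_card, card_erase_of_mem hx, ← Nat.mul_sub_one, Nat.sub_sub]

namespace Matrix

variable {n R : Type*} [Fintype n] [DecidableEq n] [CommSemiring R]

theorem trace_pow_two_eq_sum (A : Matrix n n R) :
    trace (A ^ 2) = ∑ u, ∑ v, A u v * A v u := by
  simp [trace, pow_two, mul_apply]

theorem trace_pow_three_eq_sum (A : Matrix n n R) :
    trace (A ^ 3) = ∑ u, ∑ v, ∑ w, A u v * A v w * A w u := by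
  simp only [trace, diag, pow_succ, pow_zero, one_mul, mul_apply, sum_mul]
  exact sum_congr rfl fun u _ => sum_comm

end Matrix

namespace SimpleGraph

variable {V : Type*} [Fintype V] [DecidableEq V] (G : SimpleGraph V) [DecidableRel G.Adj]

section Counting

variable {M : Type*} [AddCommMonoid M]

theorem sum_adj_eq_two_nsmul_sum_edgeFinset (f : Sym2 V → M) :
    ∑ u, ∑ v, (if G.Adj u v then f s(u, v) else 0) = 2 • ∑ e ∈ G.edgeFinset, f e := by
  have hdarts : ∑ u, ∑ v, (if G.Adj u v then f s(u, v) else 0) = ∑ d : G.Dart, f d.edge := by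
    rw [← Fintype.sum_prod_type', ← sum_filter]
    exact sum_bij' (fun p hp => ⟨p, (mem_filter.1 hp).2⟩) (fun d _ => d.toProd)
      (by simp) (fun d _ => by simp [d.adj]) (by simp) (by simp) (by simp [Dart.edge])
  rw [hdarts, ← sum_fiberwise_of_maps_to (g := Dart.edge) (t := G.edgeFinset)
    (by simp [Dart.edge_mem]), smul_sum]
  refine sum_congr rfl fun e he => ?_
  rw [sum_congr rfl fun d hd => congrArg f (mem_filter.1 hd).2, sum_const,
    G.dart_edge_fiber_card e (mem_edgeFinset.1 he)]

variable {G} in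
theorem IsNClique.filter_triangle_eq {t : Finset V} (ht : G.IsNClique 3 t) :
    univ.filter (fun p : V × V × V => (G.Adj p.1 p.2.1 ∧ G.Adj p.2.1 p.2.2 ∧ G.Adj p.2.2 p.1) ∧
        {p.1, p.2.1, p.2.2} = t)
      = {p ∈ t ×ˢ t ×ˢ t | p.1 ≠ p.2.1 ∧ p.2.1 ≠ p.2.2 ∧ p.2.2 ≠ p.1} := by
  ext ⟨a, b, c⟩
  simp only [mem_filter, mem_univ, true_and, mem_product]
  constructor
  · rintro ⟨⟨hab, hbc, hca⟩, rfl⟩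
    simp [hab.ne, hbc.ne, hca.ne]
  · rintro ⟨⟨ha, hb, hc⟩, hab, hbc, hca⟩
    refine ⟨⟨ht.isClique ha hb hab, ht.isClique hb hc hbc, ht.isClique hc ha hca⟩, ?_⟩
    refine eq_of_subset_of_card_le (by simp [insert_subset_iff, ha, hb, hc]) ?_
    rw [ht.card_eq, card_eq_three.2 ⟨a, b, c, hab, hca.symm, hbc, rfl⟩]

theorem sum_adj_triangle_eq_six_nsmul_sum_cliqueFinset (f : Finset V → M) :
    ∑ u, ∑ v, ∑ w, (if G.Adj u v ∧ G.Adj v w ∧ G.Adj w u then f {u, v, w} else 0)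
      = 6 • ∑ t ∈ G.cliqueFinset 3, f t := by
  have htriples : ∑ u, ∑ v, ∑ w, (if G.Adj u v ∧ G.Adj v w ∧ G.Adj w u then f {u, v, w} else 0)
      = ∑ p : V × V × V with G.Adj p.1 p.2.1 ∧ G.Adj p.2.1 p.2.2 ∧ G.Adj p.2.2 p.1,
          f {p.1, p.2.1, p.2.2} := by
    simp only [sum_filter, Fintype.sum_prod_type]
  rw [htriples, ← sum_fiberwise_of_maps_to (g := fun p => {p.1, p.2.1, p.2.2})
    (t := G.cliqueFinset 3) fun p hp => ?_, smul_sum]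
  · refine sum_congr rfl fun t ht => ?_
    have ht := mem_cliqueFinset_iff.1 ht
    rw [sum_congr rfl fun p hp => congrArg f (mem_filter.1 hp).2, sum_const, filter_filter,
      ht.filter_triangle_eq, card_filter_pairwise_ne_triple, ht.card_eq]
  · obtain ⟨hab, hbc, hca⟩ := (mem_filter.1 hp).2
    exact mem_cliqueFinset_iff.2 (is3Clique_triple_iff.2 ⟨hab, hca.symm, hbc⟩)

end Counting

section ScaledAdjMatrix

variable {R : Type*} [CommSemiring R]

def scaledAdjMatrix (w : V → R) : Matrix V V R :=
  diagonal w * G.adjMatrix R * diagonal w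

theorem scaledAdjMatrix_apply (w : V → R) (u v : V) :
    G.scaledAdjMatrix w u v = if G.Adj u v then w u * w v else 0 := by
  rw [scaledAdjMatrix, mul_diagonal, diagonal_mul, adjMatrix_apply]
  split_ifs <;> simp

theorem trace_scaledAdjMatrix (w : V → R) : trace (G.scaledAdjMatrix w) = 0 := by
  simp [trace, scaledAdjMatrix_apply]

theorem trace_scaledAdjMatrix_pow_two (w : V → R) :
    trace (G.scaledAdjMatrix w ^ 2) =
      2 • ∑ e ∈ G.edgeFinset, Sym2.lift ⟨fun u v => w u ^ 2 * w v ^ 2, fun _ _ => mul_comm _ _⟩ e := by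
  rw [trace_pow_two_eq_sum, ← sum_adj_eq_two_nsmul_sum_edgeFinset]
  refine sum_congr rfl fun u _ => sum_congr rfl fun v _ => ?_
  simp only [scaledAdjMatrix_apply, G.adj_comm v u, Sym2.lift_mk]
  split_ifs
  · ring
  · simp

theorem trace_scaledAdjMatrix_pow_three (w : V → R) :
    trace (G.scaledAdjMatrix w ^ 3) = 6 • ∑ t ∈ G.cliqueFinset 3, ∏ x ∈ t, w x ^ 2 := by
  rw [trace_pow_three_eq_sum, ← sum_adj_triangle_eq_six_nsmul_sum_cliqueFinset]
  refine sum_congr rfl fun u _ => sum_congr rfl fun v _ => sum_congr rfl fun x _ => ?_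
  split_ifs with htri
  · obtain ⟨huv, hvx, hxu⟩ := htri
    rw [prod_insert (by simp [huv.ne, hxu.ne']), prod_pair hvx.ne]
    simp only [scaledAdjMatrix_apply, if_pos huv, if_pos hvx, if_pos hxu]
    ring
  · simp only [scaledAdjMatrix_apply]
    split_ifs <;> simp_all

end ScaledAdjMatrix

theorem normLap_eq_one_sub_scaledAdjMatrix :
    normLap G = 1 - G.scaledAdjMatrix fun v => (√(G.degree v : ℝ))⁻¹ := by
  ext u v
  rw [Matrix.sub_apply, scaledAdjMatrix_apply, one_apply, normLap]
  split_ifs with huv hadj hadj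
  · simp_all
  · simp
  · rw [Real.sqrt_mul (Nat.cast_nonneg _), one_div, mul_inv, zero_sub]
  · simp

end SimpleGraph

theorem trace_normLap_cube_general
    {V : Type*} [Fintype V] [DecidableEq V]
    (G : SimpleGraph V) [DecidableRel G.Adj] :
    (normLap G ^ 3).trace =
      (Fintype.card V : ℝ) + ∑ e ∈ G.edgeFinset, edgeTerm G 6 e -
        ∑ t ∈ G.cliqueFinset 3, 6 / ∏ x ∈ t, (G.degree x : ℝ) := by
  have hinvSqrt_sq (x : V) : ((√(G.degree x : ℝ))⁻¹) ^ 2 = (G.degree x : ℝ)⁻¹ := by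
    rw [inv_pow, Real.sq_sqrt (Nat.cast_nonneg _)]
  set A := G.scaledAdjMatrix fun v => (√(G.degree v : ℝ))⁻¹ with hA
  have hcube : (1 - A) ^ 3 = 1 - 3 • A + 3 • A ^ 2 - A ^ 3 := by noncomm_ring
  have hedges : 3 • trace (A ^ 2) = ∑ e ∈ G.edgeFinset, edgeTerm G 6 e := by
    rw [hA, SimpleGraph.trace_scaledAdjMatrix_pow_two, smul_smul, smul_sum]
    refine sum_congr rfl fun e _ => ?_
    induction e with
    | _ u v =>
      simp only [edgeTerm, Sym2.lift_mk, hinvSqrt_sq, nsmul_eq_mul]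
      ring
  have htriangles : trace (A ^ 3) = ∑ t ∈ G.cliqueFinset 3, 6 / ∏ x ∈ t, (G.degree x : ℝ) := by
    rw [hA, SimpleGraph.trace_scaledAdjMatrix_pow_three, smul_sum]
    simp [hinvSqrt_sq, prod_inv_distrib, div_eq_mul_inv]
  rw [G.normLap_eq_one_sub_scaledAdjMatrix, hcube, trace_sub, trace_add, trace_sub, trace_smul,
    trace_smul, hA, SimpleGraph.trace_scaledAdjMatrix, ← hA, hedges, htriangles, trace_one,
    smul_zero, sub_zero]

/-- For the normalized Laplacian `L` of a simple graph `G` with no isolated vertices,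
`tr(L³) = |V_G| + ∑_{(u,v) ∈ E_G} 6/(dᵘ dᵛ) - ∑_{triangles {u,v,w}} 6/(dᵘ dᵛ dʷ)`. -/
theorem trace_normLap_cube
    {V : Type*} [Fintype V] [DecidableEq V]
    (G : SimpleGraph V) [DecidableRel G.Adj] (hdeg : ∀ v, 0 < G.degree v) :
    (normLap G ^ 3).trace =
      (Fintype.card V : ℝ) + ∑ e ∈ G.edgeFinset, edgeTerm G 6 e -
        ∑ t ∈ G.cliqueFinset 3, 6 / ∏ x ∈ t, (G.degree x : ℝ) :=
  trace_normLap_cube_general G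
end
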